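/- arXiv:math/0304199 — 3 statements merged into one kernel-verified Lean document; each statement's English description precedes it below -/
import Mathlib

section
/- For any real number β with q·β - k ∈ [q/Q, 2q/Q] for some integer k, where q, Q are positive integers with Q ≥ 100q, and for every integer N with 1 ≤ N ≤ Q/(100q), the geometric sum Δ(N) = Σ_{n=0}^{N-1} e^{2πi q n β} satisfies |Δ(N)/N - 1| ≤ 1/2. -/
/-! Reducing `qβ` modulo `1` replaces each term by `e(nθ)` with `θ = qβ - k ∈ [q/Q, 2q/Q]`.
For `n < N ≤ Q/(100q)` the phase satisfies `2πnθ ≤ 2π/50 < 1/2`, so every term lies within `1/2`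
of `1`, and hence so does their average. -/

open Finset Complex

lemma norm_sum_div_card_sub_le {𝕜 : Type*} [RCLike 𝕜] {N : ℕ} (hN : N ≠ 0) (z : ℕ → 𝕜) (w : 𝕜)
    {c : ℝ}
    (hz : ∀ n < N, ‖z n - w‖ ≤ c) : ‖(∑ n ∈ range N, z n) / N - w‖ ≤ c := by
  have hN' : (0 : ℝ) < N := by positivity
  have hsum : (∑ n ∈ range N, z n) / N - w = (∑ n ∈ range N, (z n - w)) / N := by
    rw [sum_sub_distrib, sum_const, card_range, nsmul_eq_mul]
    field_simp
  rw [hsum, norm_div, RCLike.norm_natCast, div_le_iff₀ hN']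
  calc ‖∑ n ∈ range N, (z n - w)‖ ≤ ∑ n ∈ range N, ‖z n - w‖ := norm_sum_le _ _
    _ ≤ ∑ _n ∈ range N, c := sum_le_sum fun n hn => hz n (mem_range.mp hn)
    _ = c * N := by rw [sum_const, card_range, nsmul_eq_mul, mul_comm]

lemma norm_exp_two_pi_I_mul_sub_one_le (x : ℝ) :
    ‖exp (2 * Real.pi * I * x) - 1‖ ≤ 2 * Real.pi * |x| := by
  have h := Real.norm_exp_I_mul_ofReal_sub_one_le (x := 2 * Real.pi * x)
  rw [Real.norm_eq_abs, abs_mul, abs_of_pos Real.two_pi_pos] at h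
  convert h using 4
  push_cast
  ring

lemma exp_two_pi_I_mul_sub_int (x : ℝ) (m : ℤ) :
    exp (2 * Real.pi * I * x) = exp (2 * Real.pi * I * (x - m : ℝ)) := by
  rw [← mul_one (exp (2 * Real.pi * I * (x - m : ℝ))), ← exp_int_mul_two_pi_mul_I m, ← exp_add]
  push_cast
  ring_nf

theorem stmt_0_general (q Q : ℕ)
    (k : ℤ) (β : ℝ)
    (h1 : (q : ℝ) / Q ≤ q * β - k) (h2 : (q : ℝ) * β - k ≤ 2 * q / Q)
    (N : ℕ) (hN1 : 1 ≤ N) (hN2 : (N : ℝ) ≤ Q / (100 * q)) :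
    ‖(∑ n ∈ Finset.range N,
        Complex.exp (2 * Real.pi * Complex.I * q * n * β)) / N - 1‖ ≤ 1 / 2 := by
  set θ : ℝ := q * β - k
  have hθ : 0 ≤ θ := (by positivity : (0 : ℝ) ≤ q / Q).trans h1
  have hNθ : (N : ℝ) * θ ≤ 1 / 50 :=
    calc (N : ℝ) * θ ≤ Q / (100 * q) * (2 * q / Q) := mul_le_mul hN2 h2 hθ (by positivity)
      _ = 1 / 50 * ((Q / Q) * (q / q)) := by ring
      _ ≤ 1 / 50 := mul_le_of_le_one_right (by norm_num)
        (mul_le_one₀ (div_self_le_one _) (by positivity) (div_self_le_one _))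
  refine norm_sum_div_card_sub_le (by omega) _ _ fun n hn => ?_
  have hnθ : (n : ℝ) * θ ≤ 1 / 50 :=
    (mul_le_mul_of_nonneg_right (by exact_mod_cast hn.le) hθ).trans hNθ
  have hterm : exp (2 * Real.pi * I * q * n * β) = exp (2 * Real.pi * I * (n * θ : ℝ)) := by
    convert exp_two_pi_I_mul_sub_int (n * (q * β)) (n * k) using 2 <;> push_cast [θ] <;> ring
  rw [hterm]
  calc _ ≤ 2 * Real.pi * |n * θ| := norm_exp_two_pi_I_mul_sub_one_le _
    _ ≤ 1 / 2 := by
      rw [abs_of_nonneg (by positivity)]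
      nlinarith [Real.pi_le_four, Real.pi_pos]

theorem stmt_0 (q Q : ℕ) (hq : 0 < q) (hQ : 0 < Q) (hQq : 100 * q ≤ Q)
    (k : ℤ) (β : ℝ)
    (h1 : (q : ℝ) / Q ≤ q * β - k) (h2 : (q : ℝ) * β - k ≤ 2 * q / Q)
    (N : ℕ) (hN1 : 1 ≤ N) (hN2 : (N : ℝ) ≤ Q / (100 * q)) :
    ‖(∑ n ∈ Finset.range N,
        Complex.exp (2 * Real.pi * Complex.I * q * n * β)) / N - 1‖ ≤ 1 / 2 :=
  stmt_0_general q Q k β h1 h2 N hN1 hN2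
end

section
/- Let φ : ℝ₊ → ℝ₊ be increasing and unbounded with φ(x) = o(x). Then for every r > 0 and every M ≥ 1 there exists an integer N > M such that r·n ≤ φ(n) for all n < N and φ(N) ≤ r·N ≤ φ(N) + 1, after replacing r by a smaller positive number if necessary; more precisely, there exist r' ∈ (0, r] and N > M with r'·n ≤ φ(n) for all integers 1 ≤ n < N and φ(N) ≤ r'·N ≤ φ(N) + 1. -/
open Filter

theorem stmt_10 (φ : ℝ → ℝ)
    (hpos : ∀ x > 0, 0 < φ x)
    (hmono : MonotoneOn φ (Set.Ici 0))
    (hunbdd : ∀ C : ℝ, ∃ x > 0, C < φ x)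
    (hsmall : Tendsto (fun x => φ x / x) atTop (nhds 0))
    (hφ1 : 2 ≤ φ 1)
    (r : ℝ) (hr : 0 < r) (M : ℕ) (hM : 1 ≤ M) :
    ∃ r' : ℝ, 0 < r' ∧ r' ≤ r ∧ ∃ N : ℕ, M < N ∧
      (∀ n : ℕ, 1 ≤ n → n < N → r' * n ≤ φ n) ∧
      φ N ≤ r' * N ∧ r' * N ≤ φ N + 1 := by
  classical
  set S := (Finset.Icc 1 M).image (fun n : ℕ => φ n / n) with hS
  have hSne : S.Nonempty :=
    ⟨φ 1 / 1, Finset.mem_image.2 ⟨1, Finset.mem_Icc.2 ⟨le_refl 1, hM⟩, by norm_num⟩⟩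
  set m := S.min' hSne with hm
  have hm_pos : 0 < m := by
    obtain ⟨n, hn, hmn⟩ := Finset.mem_image.1 (S.min'_mem hSne)
    have hn1 : 1 ≤ n := (Finset.mem_Icc.1 hn).1
    have hnpos : (0:ℝ) < n := by exact_mod_cast hn1
    rw [hm, ← hmn]
    exact div_pos (hpos _ hnpos) hnpos
  set r' := min r (min 1 (m / 2)) with hr'
  have hr'pos : 0 < r' := lt_min hr (lt_min one_pos (by linarith))
  have hr'r : r' ≤ r := min_le_left _ _
  have hr'1 : r' ≤ 1 := le_trans (min_le_right _ _) (min_le_left _ _)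
  have hr'm : r' ≤ m / 2 := le_trans (min_le_right _ _) (min_le_right _ _)
  -- small n case
  have hsmalln : ∀ n : ℕ, 1 ≤ n → n ≤ M → r' * n ≤ φ n := by
    intro n h1 h2
    have hnpos : (0:ℝ) < n := by exact_mod_cast h1
    have hmem : φ n / n ∈ S :=
      Finset.mem_image.2 ⟨n, Finset.mem_Icc.2 ⟨h1, h2⟩, rfl⟩
    have hmle : m ≤ φ n / n := S.min'_le _ hmem
    have : m * n ≤ φ n := by
      rw [le_div_iff₀ hnpos] at hmle; linarith
    nlinarith
  -- existence of a big n with φ n ≤ r' * n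
  have htend : Tendsto (fun n : ℕ => φ n / n) atTop (nhds 0) :=
    hsmall.comp tendsto_natCast_atTop_atTop
  have hev : ∀ᶠ n : ℕ in atTop, φ n / n < r' := htend.eventually (gt_mem_nhds hr'pos)
  obtain ⟨n₀, hn₀lt, hn₀ge⟩ := (hev.and (eventually_ge_atTop (M + 1))).exists
  have hex : ∃ n : ℕ, M < n ∧ φ n ≤ r' * n := by
    refine ⟨n₀, hn₀ge, ?_⟩
    have hnpos : (0:ℝ) < n₀ := by
      have : 1 ≤ n₀ := le_trans (Nat.le_add_left 1 M) hn₀ge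
      exact_mod_cast this
    rw [div_lt_iff₀ hnpos] at hn₀lt
    linarith
  set N := Nat.find hex with hN
  obtain ⟨hNM, hNle⟩ := Nat.find_spec hex
  have hall : ∀ n : ℕ, 1 ≤ n → n < N → r' * n ≤ φ n := by
    intro n h1 hnN
    by_cases h : n ≤ M
    · exact hsmalln n h1 h
    · push_neg at h
      have := Nat.find_min hex hnN
      simp only [not_and, not_le] at this
      exact le_of_lt (this h)
  refine ⟨r', hr'pos, hr'r, N, hNM, hall, hNle, ?_⟩
  -- upper bound
  have hK1 : 1 ≤ N - 1 := by omega
  have hKN : N - 1 < N := by omega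
  have hK : r' * (N - 1 : ℕ) ≤ φ (N - 1 : ℕ) := hall _ hK1 hKN
  have hcast : ((N - 1 : ℕ) : ℝ) = (N : ℝ) - 1 := by
    have : 1 ≤ N := by omega
    push_cast [this]; ring
  have hmonoKN : φ ((N - 1 : ℕ) : ℝ) ≤ φ N := by
    apply hmono
    · simp only [Set.mem_Ici]; positivity
    · simp only [Set.mem_Ici]; positivity
    · exact_mod_cast Nat.sub_le N 1
  rw [hcast] at hK hmonoKN
  nlinarith
end

section
/- Let (q_k)_{k≥1} be a sequence of positive integers with q_1 = 1 and q_{k+1}/(100 q_k) ∈ ℕ for all k. Define nested intervals A_n = {β : q_n/q_{n+1} ≤ q_n β - k_n ≤ 2 q_n/q_{n+1}} where k_n = Σ_{1≤s≤n} q_n/q_s. Then the intersection ∩_{n≥1} A_n contains the point α = Σ_{k≥1} 1/q_k. -/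
open Finset

set_option maxHeartbeats 800000 in
/-- Indexing from `0`: `q 0 = 1` plays the role of `q₁`. -/
theorem stmt_11 (q : ℕ → ℕ) (hq0 : q 0 = 1) (hq_pos : ∀ k, 0 < q k)
    (hdvd : ∀ k, (100 * q k) ∣ q (k + 1))
    (K : ℕ → ℝ) (hK : K = fun n => ∑ s ∈ Finset.range (n + 1), (q n : ℝ) / q s)
    (A : ℕ → Set ℝ)
    (hA : A = fun n => {β : ℝ | (q n : ℝ) / q (n + 1) ≤ (q n : ℝ) * β - K n ∧
        (q n : ℝ) * β - K n ≤ 2 * (q n : ℝ) / q (n + 1)}) :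
    (∑' k : ℕ, 1 / (q k : ℝ)) ∈ ⋂ n : ℕ, A n := by
  subst hK hA
  have hqR : ∀ k, (0:ℝ) < q k := fun k => by exact_mod_cast hq_pos k
  have hgrow : ∀ n k, q n * 100 ^ k ≤ q (n + k) := by
    intro n k
    induction k with
    | zero => simp
    | succ k ih =>
      have h2 : 100 * q (n + k) ≤ q (n + k + 1) := Nat.le_of_dvd (hq_pos _) (hdvd _)
      calc q n * 100 ^ (k + 1) = (q n * 100 ^ k) * 100 := by ring
        _ ≤ q (n + k) * 100 := Nat.mul_le_mul_right _ ih
        _ ≤ q (n + k + 1) := by linarith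
  have hgeo : Summable (fun k : ℕ => ((1:ℝ)/100) ^ k) :=
    summable_geometric_of_lt_one (by norm_num) (by norm_num)
  have hbound : ∀ n k, 1 / (q (k + n) : ℝ) ≤ (1 / (q n : ℝ)) * (1/100) ^ k := by
    intro n k
    have h' : ((q n : ℝ)) * 100 ^ k ≤ q (n + k) := by exact_mod_cast hgrow n k
    rw [add_comm k n]
    calc 1 / (q (n + k) : ℝ) ≤ 1 / ((q n : ℝ) * 100 ^ k) :=
          one_div_le_one_div_of_le (mul_pos (hqR n) (by positivity)) h'
      _ = (1 / (q n : ℝ)) * (1/100) ^ k := by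
          rw [div_pow, one_pow, div_mul_div_comm, one_mul]
  have hsum : Summable (fun k : ℕ => 1 / (q k : ℝ)) := by
    apply Summable.of_nonneg_of_le (fun k => by positivity) (fun k => ?_)
      (hgeo.mul_left (1 / (q 0 : ℝ)))
    simpa using hbound 0 k
  simp only [Set.mem_iInter, Set.mem_setOf_eq]
  intro n
  have hsplit := Summable.sum_add_tsum_nat_add (f := fun k : ℕ => 1 / (q k : ℝ)) (n + 1) hsum
  set T : ℝ := ∑' k : ℕ, 1 / (q (k + (n + 1)) : ℝ) with hT
  have hsumT : Summable (fun k : ℕ => 1 / (q (k + (n + 1)) : ℝ)) :=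
    (summable_nat_add_iff (n + 1)).2 hsum
  have hKeq : (∑ s ∈ Finset.range (n + 1), (q n : ℝ) / q s)
      = (q n : ℝ) * ∑ s ∈ Finset.range (n + 1), 1 / (q s : ℝ) := by
    rw [Finset.mul_sum]; congr 1; ext s; ring
  have hmain : (q n : ℝ) * (∑' k : ℕ, 1 / (q k : ℝ))
      - (∑ s ∈ Finset.range (n + 1), (q n : ℝ) / q s) = (q n : ℝ) * T := by
    rw [hKeq, ← hsplit]; ring
  rw [hmain]
  constructor
  · have h0 : 1 / (q (0 + (n + 1)) : ℝ) ≤ T :=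
      Summable.le_tsum hsumT 0 (fun k _ => by positivity)
    simp only [zero_add] at h0
    calc (q n : ℝ) / q (n + 1) = (q n : ℝ) * (1 / q (n + 1)) := by ring
      _ ≤ (q n : ℝ) * T := mul_le_mul_of_nonneg_left h0 (hqR n).le
  · have hTle : T ≤ (1 / (q (n + 1) : ℝ)) * (100 / 99) := by
      have h1 : T ≤ ∑' k : ℕ, (1 / (q (n + 1) : ℝ)) * (1/100) ^ k :=
        Summable.tsum_le_tsum (fun k => hbound (n + 1) k) hsumT (hgeo.mul_left _)
      have h2 : ∑' k : ℕ, (1 / (q (n + 1) : ℝ)) * (1/100) ^ k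
          = (1 / (q (n + 1) : ℝ)) * (100 / 99) := by
        rw [tsum_mul_left, tsum_geometric_of_lt_one (by norm_num) (by norm_num)]
        norm_num
      linarith
    have hpos : (0:ℝ) < (q n : ℝ) / q (n + 1) := div_pos (hqR n) (hqR (n+1))
    calc (q n : ℝ) * T ≤ (q n : ℝ) * ((1 / (q (n + 1) : ℝ)) * (100 / 99)) :=
          mul_le_mul_of_nonneg_left hTle (hqR n).le
      _ = ((q n : ℝ) / q (n + 1)) * (100 / 99) := by ring
      _ ≤ ((q n : ℝ) / q (n + 1)) * 2 := by nlinarith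
      _ = 2 * (q n : ℝ) / q (n + 1) := by ring
end
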